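/- Let F : ℝ^m → ℝ^k be a ReLU network with n hidden layers of width k. Then the number of distinct activation patterns realized by F as the input ranges over all of ℝ^m is at most (∑_{i=0}^{m} C(k,i))^n; in particular it is O(k^{mn}), uniformly over all choices of the weights and biases. -/

import Mathlib

/-- Preactivations of a ReLU network: `h^{(0)} = W^{(0)} x + b^{(0)}`, and
`h^{(d+1)} = W^{(d+1)} (ReLU h^{(d)}) + b^{(d+1)}`, where `ReLU u = max u 0` is applied
coordinatewise.  `W0` is the input-layer weight matrix, `W d` the weight matrix into hidden
layer `d` (for `d ≥ 1`), and `b d` the bias of hidden layer `d`. -/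
noncomputable def reluPreact {m k : ℕ} (W0 : Matrix (Fin k) (Fin m) ℝ)
    (W : ℕ → Matrix (Fin k) (Fin k) ℝ) (b : ℕ → Fin k → ℝ) (x : Fin m → ℝ) :
    ℕ → Fin k → ℝ
  | 0 => W0.mulVec x + b 0
  | d + 1 => (W (d + 1)).mulVec (fun i => max (reluPreact W0 W b x d i) 0) + b (d + 1)

/-- The activation pattern of a ReLU network at input `x`: for every hidden neuron (layer
`d < n`, index `i < k`) it records whether the preactivation `h^{(d)}_i` is positive. -/
noncomputable def reluActivationPattern (m k n : ℕ) (W0 : Matrix (Fin k) (Fin m) ℝ)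
    (W : ℕ → Matrix (Fin k) (Fin k) ℝ) (b : ℕ → Fin k → ℝ) (x : Fin m → ℝ) :
    Fin n → Fin k → Bool :=
  fun d i => decide (0 < reluPreact W0 W b x d i)

/-!
Fixing the activation pattern of the first `n` layers makes the preactivations of layer `n + 1`
affine in the input, so every pattern of the first `n` layers has at most as many extensions as
`k` affine functions on `ℝ^m` have positivity patterns. That number is at most
`∑_{i ≤ m} C(k, i)`: a further affine function `h` can split the (convex) cell of a pattern only if
the cell meets both `{h > 0}` and `{h ≤ 0}`, hence the hyperplane `{h = 0}`, which has one
dimension less; this is the recursion of Pascal's rule.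
-/

open Set Module

section Counting

variable {α β γ : Type*}

theorem ncard_range_eq_ncard_range_last_init {n : ℕ} (f : α → Fin (n + 1) → β) :
    (range f).ncard = (range fun x => (f x (Fin.last n), Fin.init (f x))).ncard := by
  rw [← ncard_image_of_injective _ (Fin.snocEquiv fun _ => β).symm.injective, ← range_comp]
  rfl

theorem ncard_range_prodMk_bool_le [Finite β] (s : α → Bool) (p : α → β) :
    (range fun x => (s x, p x)).ncard ≤
      (range p).ncard + (p '' {x | s x = true} ∩ p '' {x | s x = false}).ncard := by
  have hsub : (range fun x => (s x, p x)) ⊆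
      {true} ×ˢ (p '' {x | s x = true}) ∪ {false} ×ˢ (p '' {x | s x = false}) := by
    rintro _ ⟨x, rfl⟩
    cases hx : s x
    exacts [Or.inr ⟨hx, x, hx, rfl⟩, Or.inl ⟨hx, x, hx, rfl⟩]
  have hunion : p '' {x | s x = true} ∪ p '' {x | s x = false} = range p := by
    rw [← image_union, ← image_univ]
    congr 1
    ext x
    cases s x <;> simp
  calc _ ≤ _ := ncard_le_ncard hsub
    _ ≤ (p '' {x | s x = true}).ncard + (p '' {x | s x = false}).ncard :=
      (ncard_union_le _ _).trans (by simp [ncard_prod])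
    _ = _ := by rw [← hunion, ncard_union_add_ncard_inter]

theorem ncard_range_prodMk_le_mul [Finite β] [Finite γ] {s : α → γ} {p : α → β}
    (F : β → α → γ) (hs : ∀ x, s x = F (p x) x) {B : ℕ} (hB : ∀ b, (range (F b)).ncard ≤ B) :
    (range fun x => (s x, p x)).ncard ≤ B * (range p).ncard := by
  classical
  set t := (toFinite (range p)).toFinset
  have hsub : (range fun x => (s x, p x)) ⊆ ⋃ b ∈ t, range (F b) ×ˢ {b} := by
    rintro _ ⟨x, rfl⟩
    simp only [mem_iUnion, Finite.mem_toFinset, t]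
    exact ⟨p x, mem_range_self x, by simp [hs x]⟩
  calc _ ≤ _ := ncard_le_ncard hsub
    _ ≤ ∑ b ∈ t, (range (F b) ×ˢ {b}).ncard := Finset.set_ncard_biUnion_le _ _
    _ ≤ ∑ _b ∈ t, B := Finset.sum_le_sum fun b _ => by simpa [ncard_prod] using hB b
    _ = B * (range p).ncard := by
      rw [Finset.sum_const, smul_eq_mul, mul_comm, ncard_eq_toFinset_card _]

end Counting

theorem sum_range_choose_succ_eq (k m : ℕ) :
    ∑ i ∈ Finset.range (m + 1), (k + 1).choose i =
      ∑ i ∈ Finset.range (m + 1), k.choose i + ∑ i ∈ Finset.range m, k.choose i := by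
  induction m with
  | zero => simp
  | succ m ih =>
    simp only [Finset.sum_range_succ _ (m + 1), ih, Nat.choose_succ_succ']
    rw [Finset.sum_range_succ _ m]
    ring

theorem one_le_sum_range_choose (k m : ℕ) : 1 ≤ ∑ i ∈ Finset.range (m + 1), k.choose i := by
  simpa using Finset.single_le_sum (f := k.choose) (by simp) (Finset.mem_range.2 m.succ_pos)

theorem decide_pos_lineMap {a b t : ℝ} (hab : decide (0 < a) = decide (0 < b))
    (ht : t ∈ Icc 0 1) : decide (0 < AffineMap.lineMap a b t) = decide (0 < a) := by
  by_cases ha : 0 < a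
  · have hb : 0 < b := by simpa [ha] using hab
    simpa [ha] using (convex_Ioi (0 : ℝ)).lineMap_mem ha hb ht
  · have hb : b ≤ 0 := by simpa [ha] using hab
    have := (convex_Iic (0 : ℝ)).lineMap_mem (not_lt.1 ha) hb ht
    simp [ha, not_lt.2 (mem_Iic.1 this)]

section Affine

variable {ι V : Type*} [AddCommGroup V] [Module ℝ V]

noncomputable def posPattern {α : Type*} (f : ι → α → ℝ) (x : α) : ι → Bool :=
  fun i => decide (0 < f i x)

theorem exists_posPattern_eq_of_pos_of_nonpos (g : ι → V →ᵃ[ℝ] ℝ) (f : V →ᵃ[ℝ] ℝ) {x y : V}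
    (hxy : posPattern (fun i => g i) x = posPattern (fun i => g i) y)
    (hx : 0 < f x) (hy : f y ≤ 0) :
    ∃ z, f z = 0 ∧ posPattern (fun i => g i) z = posPattern (fun i => g i) x := by
  have hd : 0 < f x - f y := by linarith
  set t := f x / (f x - f y)
  have ht : t ∈ Icc 0 1 := ⟨div_nonneg hx.le hd.le, (div_le_one hd).2 (by linarith)⟩
  refine ⟨AffineMap.lineMap x y t, ?_, ?_⟩
  · rw [AffineMap.apply_lineMap, AffineMap.lineMap_apply_ring']
    simp only [t]
    field_simp
    ring
  · funext i
    simp only [posPattern, AffineMap.apply_lineMap]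
    exact decide_pos_lineMap (congrFun hxy i) ht

theorem linear_ne_zero_of_lt {f : V →ᵃ[ℝ] ℝ} {x y : V} (h : f y < f x) : f.linear ≠ 0 := by
  intro h0
  have := f.linearMap_vsub x y
  simp only [h0, LinearMap.zero_apply, vsub_eq_sub] at this
  linarith

def kerTranslate (f : V →ᵃ[ℝ] ℝ) (z₀ : V) : LinearMap.ker f.linear →ᵃ[ℝ] V :=
  (LinearMap.ker f.linear).subtype.toAffineMap + AffineMap.const ℝ _ z₀

theorem zeroSet_subset_range_kerTranslate (f : V →ᵃ[ℝ] ℝ) {z₀ : V} (hz₀ : f z₀ = 0) :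
    {z | f z = 0} ⊆ range (kerTranslate f z₀) := by
  intro z hz
  have hker : z - z₀ ∈ LinearMap.ker f.linear := by
    rw [LinearMap.mem_ker, ← vsub_eq_sub, f.linearMap_vsub, hz₀, vsub_eq_sub, sub_zero]
    exact hz
  exact ⟨⟨z - z₀, hker⟩, by simp [kerTranslate]⟩

theorem inter_image_posPattern_subset_range (g : ι → V →ᵃ[ℝ] ℝ) (f : V →ᵃ[ℝ] ℝ) {z₀ : V}
    (hz₀ : f z₀ = 0) :
    posPattern (fun i => g i) '' {x | 0 < f x} ∩ posPattern (fun i => g i) '' {x | f x ≤ 0} ⊆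
      range (posPattern fun i => (g i).comp (kerTranslate f z₀)) := by
  rintro _ ⟨⟨x, hx, rfl⟩, y, hy, hxy⟩
  obtain ⟨z, hz, hzx⟩ := exists_posPattern_eq_of_pos_of_nonpos g f hxy.symm hx hy
  obtain ⟨v, rfl⟩ := zeroSet_subset_range_kerTranslate f hz₀ hz
  exact ⟨v, hzx⟩

end Affine

theorem ncard_range_posPattern_le {V : Type*} [AddCommGroup V] [Module ℝ V]
    [FiniteDimensional ℝ V] {k m : ℕ} (f : Fin k → V →ᵃ[ℝ] ℝ) (hV : finrank ℝ V ≤ m) :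
    (range (posPattern fun i => f i)).ncard ≤ ∑ i ∈ Finset.range (m + 1), k.choose i := by
  induction k generalizing V m with
  | zero =>
    calc _ ≤ 1 := ncard_le_one_of_subsingleton _
      _ ≤ _ := one_le_sum_range_choose 0 m
  | succ k ih =>
    set g : Fin k → V →ᵃ[ℝ] ℝ := fun i => f i.castSucc
    set h := f (Fin.last k)
    set p := posPattern fun i => g i
    set s : V → Bool := fun x => decide (0 < h x)
    have hcut : (p '' {x | s x = true} ∩ p '' {x | s x = false}).ncard ≤
        ∑ i ∈ Finset.range m, k.choose i := by
      simp only [s, decide_eq_true_iff, decide_eq_false_iff_not, not_lt]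
      rcases (p '' {x | 0 < h x} ∩ p '' {x | h x ≤ 0}).eq_empty_or_nonempty with hempty | hne
      · simp [hempty]
      obtain ⟨_, ⟨x, hx, rfl⟩, y, hy, hxy⟩ := hne
      obtain ⟨z₀, hz₀, -⟩ := exists_posPattern_eq_of_pos_of_nonpos g h hxy.symm hx hy
      have hrank := Module.Dual.finrank_ker_add_one_of_ne_zero
        (linear_ne_zero_of_lt (lt_of_le_of_lt (show h y ≤ 0 from hy) hx))
      obtain ⟨m, rfl⟩ := Nat.exists_eq_add_one_of_ne_zero (by omega : m ≠ 0)
      calc _ ≤ _ := ncard_le_ncard (inter_image_posPattern_subset_range g h hz₀)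
        _ ≤ _ := ih _ (by omega)
    calc _ = (range fun x => (s x, p x)).ncard := ncard_range_eq_ncard_range_last_init _
      _ ≤ _ := ncard_range_prodMk_bool_le s p
      _ ≤ _ := add_le_add (ih g hV) hcut
      _ = _ := (sum_range_choose_succ_eq k m).symm

theorem max_zero_eq_ite {u : ℝ} {c : Bool} (h : 0 < u ↔ c = true) :
    max u 0 = if c then u else 0 := by
  cases c
  · simpa using not_lt.1 (mt h.1 (by simp))
  · simpa using (h.2 rfl).le

/-- The preactivations of layer `d` on the inputs at which every earlier layer `d'` has activation
pattern `P d'`: there each ReLU acts as the diagonal `0/1` mask of `P d'`. -/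
noncomputable def maskedPreact {m k : ℕ} (W0 : Matrix (Fin k) (Fin m) ℝ)
    (W : ℕ → Matrix (Fin k) (Fin k) ℝ) (b : ℕ → Fin k → ℝ) (P : ℕ → Fin k → Bool) :
    ℕ → (Fin m → ℝ) →ᵃ[ℝ] (Fin k → ℝ)
  | 0 => W0.mulVecLin.toAffineMap + AffineMap.const ℝ _ (b 0)
  | d + 1 =>
    (W (d + 1) * Matrix.diagonal fun i => if P d i then 1 else 0).mulVecLin.toAffineMap.comp
        (maskedPreact W0 W b P d) + AffineMap.const ℝ _ (b (d + 1))

theorem reluPreact_eq_maskedPreact {m k : ℕ} (W0 : Matrix (Fin k) (Fin m) ℝ)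
    (W : ℕ → Matrix (Fin k) (Fin k) ℝ) (b : ℕ → Fin k → ℝ) (P : ℕ → Fin k → Bool)
    (x : Fin m → ℝ) {d : ℕ}
    (hP : ∀ d' < d, ∀ i, 0 < reluPreact W0 W b x d' i ↔ P d' i = true) :
    reluPreact W0 W b x d = maskedPreact W0 W b P d x := by
  induction d with
  | zero => simp [reluPreact, maskedPreact]
  | succ d ih =>
    have hrelu : (fun i => max (reluPreact W0 W b x d i) 0) =
        (Matrix.diagonal fun i => if P d i then 1 else 0).mulVec (maskedPreact W0 W b P d x) := by
      funext i
      rw [max_zero_eq_ite (hP d d.lt_succ_self i),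
        ih fun d' hd' => hP d' (hd'.trans d.lt_succ_self)]
      simp [Matrix.mulVec_diagonal]
    simp [reluPreact, maskedPreact, hrelu, Matrix.mulVec_mulVec]

theorem ncard_range_reluActivationPattern_le (m k n : ℕ) (W0 : Matrix (Fin k) (Fin m) ℝ)
    (W : ℕ → Matrix (Fin k) (Fin k) ℝ) (b : ℕ → Fin k → ℝ) :
    (range (reluActivationPattern m k n W0 W b)).ncard ≤
      (∑ i ∈ Finset.range (m + 1), k.choose i) ^ n := by
  induction n with
  | zero => simpa using ncard_le_one_of_subsingleton (range (reluActivationPattern m k 0 W0 W b))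
  | succ n ih =>
    set B := ∑ i ∈ Finset.range (m + 1), k.choose i
    let extend (P : Fin n → Fin k → Bool) (d : ℕ) : Fin k → Bool :=
      if h : d < n then P ⟨d, h⟩ else fun _ => false
    let F (P : Fin n → Fin k → Bool) :=
      posPattern fun i => (AffineMap.proj i).comp (maskedPreact W0 W b (extend P) n)
    have hs : ∀ x, posPattern (fun i y => reluPreact W0 W b y n i) x =
        F (reluActivationPattern m k n W0 W b x) x := by
      intro x
      funext i
      rw [posPattern, reluPreact_eq_maskedPreact W0 W b (extend _) x]
      · rfl
      intro d hd j
      simp [extend, hd, reluActivationPattern]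
    calc (range (reluActivationPattern m k (n + 1) W0 W b)).ncard
        = (range fun x => (posPattern (fun i y => reluPreact W0 W b y n i) x,
            reluActivationPattern m k n W0 W b x)).ncard :=
          ncard_range_eq_ncard_range_last_init _
      _ ≤ B * (range (reluActivationPattern m k n W0 W b)).ncard :=
          ncard_range_prodMk_le_mul F hs fun P =>
            ncard_range_posPattern_le _ (finrank_fin_fun ℝ).le
      _ ≤ B * B ^ n := Nat.mul_le_mul_left _ ih
      _ = B ^ (n + 1) := (pow_succ' _ _).symm

/-- **(Tight) upper bound on the number of activation patterns of a ReLU network.**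
For a fully connected ReLU network with `n` hidden layers of width `k` and inputs in `ℝ^m`,
the number of distinct activation patterns realized as the input ranges over all of `ℝ^m`
is at most `(∑_{i=0}^m C(k,i))^n = O(k^{mn})`, for every choice of weights and biases. -/
theorem card_reluActivationPatterns_le (m k n : ℕ)
    (W0 : Matrix (Fin k) (Fin m) ℝ) (W : ℕ → Matrix (Fin k) (Fin k) ℝ)
    (b : ℕ → Fin k → ℝ) :
    Nat.card (Set.range (reluActivationPattern m k n W0 W b)) ≤
      (∑ i ∈ Finset.range (m + 1), Nat.choose k i) ^ n := by
  rw [Nat.card_coe_set_eq]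
  exact ncard_range_reluActivationPattern_le m k n W0 W b
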